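/- Suppose |b(i)| ≤ 1 for all i. The subvertex q_* = Σ_{i=0}^m b''(i)·e_{ν_i}, where b''(i) = (b(i)+1)/2 for i ≥ 1 and b''(0) = 1 − Σ_{i=1}^m b''(i), belongs to P(b) if and only if (1/m)Σ_{i=1}^m b(i) ≤ 2/m − 1; and in that case q_* is a vertex of P(b). -/

import Mathlib

/-!
On functions supported on `{ν_0, …, ν_m}`, `ℓ_0` measures the total mass and `ℓ_i` (`i ≥ 1`)
twice the mass at `ν_i` minus the total mass, so the equations of `P(b)` have `q_*` as their only
solution with this support. Hence `q_*` lies in `P(b)` exactly when its weights `b''(i)` are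
nonnegative; under `|b(i)| ≤ 1` only `b''(0) ≥ 0` is a constraint, and it is the stated inequality.
The uniqueness also gives extremality: both ends of an open segment through `q_*` inside the
nonnegative orthant vanish wherever `q_*` does, so they equal `q_*` too.
-/

open Finset

/-- The value λ(k) for λ ∈ Λ = {0,1}^m, extended by the conventions λ(0) = 0 and
λ(m+1) = 1 (positions 1,…,m carry the actual values of λ). -/
def lamExt (m : ℕ) (lam : Fin m → Bool) (k : ℕ) : ℕ :=
  if h : 1 ≤ k ∧ k ≤ m then (if lam ⟨k - 1, by omega⟩ then 1 else 0)
  else if k = 0 then 0 else 1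

/-- The vector ℓ_i ∈ ℝ^Λ, ℓ_i(λ) = (−1)^{λ(i)}, for 0 ≤ i ≤ m. -/
def ell (m : ℕ) (i : ℕ) (lam : Fin m → Bool) : ℝ := (-1) ^ lamExt m lam i

/-- The standard inner product on ℝ^Λ. -/
def ip (m : ℕ) (x y : (Fin m → Bool) → ℝ) : ℝ := ∑ lam : Fin m → Bool, x lam * y lam

/-- The polytope P(b). -/
def Pb (m : ℕ) (b : ℕ → ℝ) : Set ((Fin m → Bool) → ℝ) :=
  {x | ip m (ell m 0) x = 1 ∧ (∀ i ∈ Finset.Icc 1 m, ip m (ell m i) x = b i) ∧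
    ∀ lam, 0 ≤ x lam}

/-- b''(i) = (b(i)+1)/2 for 1 ≤ i ≤ m and b''(0) = 1 − Σ_{i=1}^m b''(i). -/
noncomputable def b'' (m : ℕ) (b : ℕ → ℝ) (i : ℕ) : ℝ :=
  if i = 0 then 1 - ∑ j ∈ Finset.Icc 1 m, (b j + 1) / 2 else (b i + 1) / 2

/-- ν_j ∈ Λ: ν_j(k) = 1 − δ_{jk}; in particular ν_0 = (1,…,1). -/
def nu (m j : ℕ) : Fin m → Bool := fun k => decide ((k : ℕ) + 1 ≠ j)

/-- The subvertex q_* = Σ_{i=0}^m b''(i)·e_{ν_i}. -/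
noncomputable def subvertex (m : ℕ) (b : ℕ → ℝ) : (Fin m → Bool) → ℝ :=
  fun lam => ∑ i ∈ Finset.range (m + 1), b'' m b i * (if lam = nu m i then 1 else 0)

lemma mem_extremePoints_of_forall_eq {𝕜 ι : Type*} [Field 𝕜] [LinearOrder 𝕜]
    [IsStrictOrderedRing 𝕜] {S : Set (ι → 𝕜)} {q : ι → 𝕜} (hq : q ∈ S)
    (hS : ∀ x ∈ S, 0 ≤ x) (huniq : ∀ x ∈ S, (∀ i, q i = 0 → x i = 0) → x = q) :
    q ∈ Set.extremePoints 𝕜 S := by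
  refine mem_extremePoints.2 ⟨hq, fun x hx y hy ⟨a, c, ha, hc, _, hq_eq⟩ => ?_⟩
  have hvanish : ∀ i, q i = 0 → x i = 0 ∧ y i = 0 := by
    intro i hqi
    have hsum : a * x i + c * y i = 0 := by
      rw [← hqi, ← hq_eq]; rfl
    obtain ⟨hax, hcy⟩ := (add_eq_zero_iff_of_nonneg (mul_nonneg ha.le (hS x hx i))
      (mul_nonneg hc.le (hS y hy i))).1 hsum
    exact ⟨(mul_eq_zero.1 hax).resolve_left ha.ne', (mul_eq_zero.1 hcy).resolve_left hc.ne'⟩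
  exact ⟨huniq x hx fun i hi => (hvanish i hi).1, huniq y hy fun i hi => (hvanish i hi).2⟩

lemma sum_range_succ_eq_sum_Icc {M : Type*} [AddCommMonoid M] (f : ℕ → M) (m : ℕ) :
    ∑ i ∈ range m, f (i + 1) = ∑ i ∈ Icc 1 m, f i := by
  rw [← Ico_add_one_right_eq_Icc, sum_Ico_eq_sum_range, Nat.add_sub_cancel]
  exact sum_congr rfl fun i _ => by rw [add_comm]

namespace Subvertex

variable {m : ℕ}

def nuFinset (m : ℕ) : Finset (Fin m → Bool) := (range (m + 1)).image (nu m)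

lemma nu_injOn : Set.InjOn (nu m) (range (m + 1) : Set ℕ) := by
  intro i hi j hj h
  simp only [coe_range, Set.mem_Iio] at hi hj
  by_contra hne
  have hne_of_pos : ∀ {i j : ℕ}, i < m + 1 → 0 < i → i ≠ j → nu m i ≠ nu m j := by
    intro i j hi hi0 hne h
    have := congrFun h ⟨i - 1, by omega⟩
    simp only [nu, decide_eq_decide] at this
    omega
  rcases Nat.eq_zero_or_pos i with rfl | hi0
  · exact hne_of_pos hj (by omega) (Ne.symm hne) h.symm
  · exact hne_of_pos hi hi0 hne h

lemma sum_eq_sum_nu (x : (Fin m → Bool) → ℝ) (hx : ∀ lam ∉ nuFinset m, x lam = 0) :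
    ∑ lam, x lam = ∑ j ∈ range (m + 1), x (nu m j) := by
  rw [← sum_image nu_injOn]
  exact (sum_subset (subset_univ _) fun lam _ hlam => hx lam hlam).symm

lemma ell_nu {i : ℕ} (hi : i ∈ Icc 1 m) (j : ℕ) :
    ell m i (nu m j) = if i = j then 1 else -1 := by
  obtain ⟨hi1, him⟩ := mem_Icc.1 hi
  rcases eq_or_ne i j with rfl | hij <;> simp [ell, lamExt, nu, *]

lemma ip_ell_zero (x : (Fin m → Bool) → ℝ) : ip m (ell m 0) x = ∑ lam, x lam := by
  simp [ip, ell, lamExt]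

lemma ip_ell_of_mem_Icc {i : ℕ} (hi : i ∈ Icc 1 m) (x : (Fin m → Bool) → ℝ)
    (hx : ∀ lam ∉ nuFinset m, x lam = 0) :
    ip m (ell m i) x = 2 * x (nu m i) - ∑ j ∈ range (m + 1), x (nu m j) := by
  have him : i ∈ range (m + 1) := mem_range.2 (Nat.lt_succ_of_le (mem_Icc.1 hi).2)
  calc ip m (ell m i) x
      = ∑ j ∈ range (m + 1), ((if i = j then 2 * x (nu m j) else 0) - x (nu m j)) := by
        rw [ip, sum_eq_sum_nu _ fun lam hlam => by rw [hx lam hlam, mul_zero]]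
        refine sum_congr rfl fun j _ => ?_
        rw [ell_nu hi]
        split_ifs <;> ring
    _ = 2 * x (nu m i) - ∑ j ∈ range (m + 1), x (nu m j) := by
        rw [sum_sub_distrib, sum_ite_eq, if_pos him]

lemma subvertex_nu {j : ℕ} (hj : j ∈ range (m + 1)) (b : ℕ → ℝ) :
    subvertex m b (nu m j) = b'' m b j := by
  rw [subvertex, sum_eq_single j]
  · simp
  · intro i hi hij
    rw [if_neg fun h => hij (nu_injOn hi hj h.symm), mul_zero]
  · exact fun h => absurd hj h

lemma subvertex_eq_zero_of_notMem {lam : Fin m → Bool} (hlam : lam ∉ nuFinset m)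
    (b : ℕ → ℝ) : subvertex m b lam = 0 :=
  sum_eq_zero fun i hi => by
    rw [if_neg fun h => hlam (mem_image.2 ⟨i, hi, h.symm⟩), mul_zero]

lemma b''_of_mem_Icc {i : ℕ} (hi : i ∈ Icc 1 m) (b : ℕ → ℝ) : b'' m b i = (b i + 1) / 2 := by
  rw [b'', if_neg (by have := (mem_Icc.1 hi).1; omega)]

lemma sum_b'' (b : ℕ → ℝ) : ∑ j ∈ range (m + 1), b'' m b j = 1 := by
  rw [sum_range_succ', sum_range_succ_eq_sum_Icc (b'' m b),
    sum_congr rfl fun i hi => b''_of_mem_Icc hi b]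
  simp [b'']

lemma subvertex_mem_Pb_iff (b : ℕ → ℝ) :
    subvertex m b ∈ Pb m b ↔ ∀ lam, 0 ≤ subvertex m b lam := by
  have hsupp : ∀ lam ∉ nuFinset m, subvertex m b lam = 0 :=
    fun lam hlam => subvertex_eq_zero_of_notMem hlam b
  have hmass : ∑ j ∈ range (m + 1), subvertex m b (nu m j) = 1 := by
    rw [sum_congr rfl fun j hj => subvertex_nu hj b, sum_b'']
  refine ⟨fun h => h.2.2, fun hpos => ⟨?_, fun i hi => ?_, hpos⟩⟩
  · rw [ip_ell_zero, sum_eq_sum_nu _ hsupp, hmass]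
  · rw [ip_ell_of_mem_Icc hi _ hsupp, hmass,
      subvertex_nu (mem_range.2 (Nat.lt_succ_of_le (mem_Icc.1 hi).2)), b''_of_mem_Icc hi]
    ring

lemma eq_subvertex_of_mem_Pb {b : ℕ → ℝ} {x : (Fin m → Bool) → ℝ} (hx : x ∈ Pb m b)
    (hsupp : ∀ lam ∉ nuFinset m, x lam = 0) : x = subvertex m b := by
  obtain ⟨hmass, hlin, -⟩ := hx
  rw [ip_ell_zero, sum_eq_sum_nu x hsupp] at hmass
  have hIcc : ∀ i ∈ Icc 1 m, x (nu m i) = b'' m b i := by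
    intro i hi
    have := hlin i hi
    rw [ip_ell_of_mem_Icc hi x hsupp, hmass] at this
    rw [b''_of_mem_Icc hi]
    linarith
  have hnu : ∀ j ∈ range (m + 1), x (nu m j) = b'' m b j := by
    have htail : ∑ i ∈ range m, x (nu m (i + 1)) = ∑ i ∈ range m, b'' m b (i + 1) := by
      rw [sum_range_succ_eq_sum_Icc (fun i => x (nu m i)), sum_range_succ_eq_sum_Icc (b'' m b)]
      exact sum_congr rfl hIcc
    have hzero : x (nu m 0) = b'' m b 0 := by
      have h := sum_b'' (m := m) b
      rw [sum_range_succ'] at hmass h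
      linarith
    intro j hj
    rcases Nat.eq_zero_or_pos j with rfl | hj0
    · exact hzero
    · exact hIcc j (mem_Icc.2 ⟨hj0, Nat.lt_succ_iff.1 (mem_range.1 hj)⟩)
  funext lam
  by_cases hlam : lam ∈ nuFinset m
  · obtain ⟨j, hj, rfl⟩ := mem_image.1 hlam
    rw [hnu j hj, subvertex_nu hj]
  · rw [hsupp lam hlam, subvertex_eq_zero_of_notMem hlam]

lemma subvertex_nonneg_iff {b : ℕ → ℝ} (hb : ∀ i ∈ Icc 1 m, |b i| ≤ 1) :
    (∀ lam, 0 ≤ subvertex m b lam) ↔ 0 ≤ b'' m b 0 := by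
  refine ⟨fun h => subvertex_nu (mem_range.2 m.succ_pos) b ▸ h (nu m 0), fun h0 lam => ?_⟩
  refine sum_nonneg fun i hi => mul_nonneg ?_ (by split_ifs <;> norm_num)
  rcases Nat.eq_zero_or_pos i with rfl | hi0
  · exact h0
  · have hi' : i ∈ Icc 1 m := mem_Icc.2 ⟨hi0, Nat.lt_succ_iff.1 (mem_range.1 hi)⟩
    rw [b''_of_mem_Icc hi']
    linarith [(abs_le.1 (hb i hi')).1]

lemma b''_zero_nonneg_iff (hm : 1 ≤ m) (b : ℕ → ℝ) :
    0 ≤ b'' m b 0 ↔ (m : ℝ)⁻¹ * ∑ i ∈ Icc 1 m, b i ≤ 2 / m - 1 := by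
  have hm0 : (0 : ℝ) < m := by exact_mod_cast hm
  have hb0 : b'' m b 0 = 1 - (∑ i ∈ Icc 1 m, b i + m) / 2 := by
    simp [b'', sum_div, sum_add_distrib, add_div]
    ring
  rw [inv_mul_le_iff₀ hm0, show (m : ℝ) * (2 / m - 1) = 2 - m by field_simp, hb0]
  constructor <;> intro <;> linarith

end Subvertex

open Subvertex in
/-- If |b(i)| ≤ 1 for all i, the subvertex belongs to P(b) iff
(1/m)Σ b(i) ≤ 2/m − 1, and in that case it is a vertex (extreme point) of P(b). -/
theorem stmt12 (m : ℕ) (hm : 1 ≤ m) (b : ℕ → ℝ)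
    (hb : ∀ i ∈ Finset.Icc 1 m, |b i| ≤ 1) :
    (subvertex m b ∈ Pb m b ↔
      (m : ℝ)⁻¹ * ∑ i ∈ Finset.Icc 1 m, b i ≤ 2 / m - 1) ∧
    ((m : ℝ)⁻¹ * ∑ i ∈ Finset.Icc 1 m, b i ≤ 2 / m - 1 →
      subvertex m b ∈ Set.extremePoints ℝ (Pb m b)) := by
  have hmem : subvertex m b ∈ Pb m b ↔ (m : ℝ)⁻¹ * ∑ i ∈ Icc 1 m, b i ≤ 2 / m - 1 :=
    (subvertex_mem_Pb_iff b).trans <| (subvertex_nonneg_iff hb).trans (b''_zero_nonneg_iff hm b)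
  refine ⟨hmem, fun h => mem_extremePoints_of_forall_eq (hmem.2 h) (fun x hx => hx.2.2) ?_⟩
  exact fun x hx hvanish => eq_subvertex_of_mem_Pb hx fun lam hlam =>
    hvanish lam (subvertex_eq_zero_of_notMem hlam b)
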